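/- For odd N = 2n+1, the eigenvalue counting function of the Laplacian on SO(2n+1) satisfies N(λ) = (1/(2^n n!)) Σ_{x ∈ 𝕆ⁿ, ‖x‖² ≤ R²} m(x), where 𝕆 denotes the odd integers, R² = 4λ + n(4n²−1)/3, and m(x) = (Π_{0 ≤ i ≤ n−1} (x_{n−i}/(2i+1)) · Π_{0 ≤ i < j ≤ n−1} (x_{n−j}² − x_{n−i}²)/((2j+1)² − (2i+1)²))². -/

import Mathlib

/-!
Writing `ρ = (1, 3, …, 2n - 1)`, the multiplicity is Weyl's dimension formula
`m(x) = (∏_{α > 0} ⟨x, α⟩ / ⟨ρ, α⟩)²` over the positive roots `eᵢ`, `eⱼ ± eᵢ` of `B_n`. Hence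
`m` is invariant under the hyperoctahedral group `{±1}ⁿ ⋊ Sₙ` and vanishes unless the `|xᵢ|`
are nonzero and pairwise distinct. The odd lattice points of the ball are stable under this
group, which acts freely on the points where `m ≠ 0`; each such orbit has `2ⁿ n!` elements and
meets the chamber `x₁ > ⋯ > xₙ > 0` exactly once.
-/

open Finset

open scoped Classical

/-- Weyl's dimension formula multiplicity for SO(2n+1), as a function of the odd
integers `x_j = 2b_j + 2n - 2j + 1` (0-indexed, so `x_j` is `x (j-1)`):
`m(x) = (Π_i x_{n-i}/(2i+1) · Π_{i<j} (x_{n-j}² − x_{n-i}²)/((2j+1)² − (2i+1)²))²`. -/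
noncomputable def multSOodd (n : ℕ) (hn : 0 < n) (x : Fin n → ℤ) : ℝ :=
  ((∏ i ∈ Finset.range n, ((x ⟨n - 1 - i, by omega⟩ : ℤ) : ℝ) / (2 * (i : ℝ) + 1)) *
    ∏ i ∈ Finset.range n, ∏ j ∈ Finset.Ico (i + 1) n,
      (((x ⟨n - 1 - j, by omega⟩ : ℤ) : ℝ) ^ 2 - ((x ⟨n - 1 - i, by omega⟩ : ℤ) : ℝ) ^ 2) /
        ((2 * (j : ℝ) + 1) ^ 2 - (2 * (i : ℝ) + 1) ^ 2)) ^ 2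

open Matrix Equiv

section WeylProduct

variable {R : Type*} [CommRing R] {n : ℕ}

lemma det_vandermonde_comp_perm_sq (v : Fin n → R) (σ : Perm (Fin n)) :
    (vandermonde (v ∘ σ)).det ^ 2 = (vandermonde v).det ^ 2 := by
  have hsub : vandermonde (v ∘ σ) = (vandermonde v).submatrix σ id := by
    ext i j
    simp [vandermonde_apply]
  rw [hsub, det_permute, mul_pow, ← Int.cast_pow, ← Units.val_pow_eq_pow_val, Int.units_sq,
    Units.val_one, Int.cast_one, one_mul]

/-- Up to sign, the product of `⟨v, α⟩` over the positive roots `eᵢ` and `eⱼ ± eᵢ` of `B_n`. -/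
def weylProd (v : Fin n → R) : R :=
  (∏ i, v i) * (vandermonde fun i => v i ^ 2).det

lemma sq_weylProd_eq_of_sq_eq_comp {v w : Fin n → R} (σ : Perm (Fin n))
    (h : ∀ i, w i ^ 2 = v (σ i) ^ 2) : weylProd w ^ 2 = weylProd v ^ 2 := by
  have hsq : (fun i => w i ^ 2) = (fun i => v i ^ 2) ∘ σ := funext h
  rw [weylProd, weylProd, mul_pow, mul_pow, ← Finset.prod_pow, ← Finset.prod_pow, hsq,
    det_vandermonde_comp_perm_sq]
  exact congrArg (· * _) (Equiv.prod_comp σ fun i => v i ^ 2)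

lemma weylProd_ne_zero_iff [IsDomain R] {v : Fin n → R} :
    weylProd v ≠ 0 ↔ (∀ i, v i ≠ 0) ∧ Function.Injective fun i => v i ^ 2 := by
  rw [weylProd, mul_ne_zero_iff, Finset.prod_ne_zero_iff, det_vandermonde_ne_zero_iff]
  simp

end WeylProduct

lemma prod_range_prod_Ico_eq_prod_Ioi {M : Type*} [CommMonoid M] (n : ℕ) (F : ℕ → ℕ → M) :
    ∏ i ∈ range n, ∏ j ∈ Ico (i + 1) n, F i j = ∏ i : Fin n, ∏ j ∈ Ioi i, F i j := by
  rw [prod_range]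
  refine Fintype.prod_congr _ _ fun i => ?_
  rw [Ico_add_one_left_eq_Ioo, ← Fin.map_valEmbedding_Ioi, prod_map]
  rfl

lemma multSOodd_eq (n : ℕ) (hn : 0 < n) (x : Fin n → ℤ) :
    multSOodd n hn x =
      weylProd (fun i => (x i : ℝ)) ^ 2 / weylProd (fun i : Fin n => 2 * (i : ℝ) + 1) ^ 2 := by
  have hrev : ∀ j : Fin n, (x ⟨n - 1 - j, by omega⟩ : ℝ) = x j.rev := fun j => by
    congr 2; ext; simp only [Fin.val_rev]; omega
  have hsq := sq_weylProd_eq_of_sq_eq_comp (v := fun i => (x i : ℝ)) (w := fun i => (x i.rev : ℝ))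
    Fin.revPerm fun _ => rfl
  rw [multSOodd, prod_range_prod_Ico_eq_prod_Ioi, prod_range (fun i => _ / _)]
  simp only [hrev, prod_div_distrib, ← det_vandermonde]
  rw [← hsq, ← div_pow, weylProd, weylProd]
  ring

section Sorting

variable {α : Type*} [LinearOrder α] {n : ℕ}

lemma exists_strictAnti_comp_perm {a : Fin n → α} (ha : Function.Injective a) :
    ∃ (y : Fin n → α) (σ : Perm (Fin n)), StrictAnti y ∧ a = y ∘ σ := by
  set τ := Tuple.sort a
  have hmono : StrictMono (a ∘ τ) :=
    (Tuple.monotone_sort a).strictMono_of_injective (ha.comp τ.injective)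
  refine ⟨a ∘ τ ∘ Fin.rev, τ⁻¹.trans Fin.revPerm, fun i j hij => hmono (Fin.rev_lt_rev.mpr hij), ?_⟩
  ext i
  simp

lemma StrictAnti.eq_of_comp_perm_eq {y y' : Fin n → α} {σ σ' : Perm (Fin n)}
    (hy : StrictAnti y) (hy' : StrictAnti y') (h : y ∘ σ = y' ∘ σ') : y = y' ∧ σ = σ' := by
  have hrange : Set.range y = Set.range y' := by
    rw [← σ.surjective.range_comp, h, σ'.surjective.range_comp]
  have hyy' : y = y' :=
    (StrictMono.range_inj (f := OrderDual.toDual ∘ y) (g := OrderDual.toDual ∘ y') hy hy').mp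
      (by simp only [Set.range_comp, hrange])
  subst hyy'
  exact ⟨rfl, Equiv.ext fun i => hy.injective (congrFun h i)⟩

end Sorting

lemma forall_succ_lt_and_lt_last_iff {α : Type*} [Preorder α] {n : ℕ} (hn : 0 < n)
    (x : Fin n → α) (a : α) :
    ((∀ i : ℕ, ∀ h : i + 1 < n, x ⟨i + 1, h⟩ < x ⟨i, Nat.lt_of_succ_lt h⟩) ∧
        a < x ⟨n - 1, Nat.sub_lt hn one_pos⟩) ↔
      StrictAnti x ∧ ∀ i, a < x i := by
  obtain ⟨m, rfl⟩ : ∃ m, n = m + 1 := ⟨n - 1, by omega⟩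
  have hadj : (∀ i : ℕ, ∀ h : i + 1 < m + 1, x ⟨i + 1, h⟩ < x ⟨i, Nat.lt_of_succ_lt h⟩) ↔
      StrictAnti x := by
    rw [Fin.strictAnti_iff_succ_lt]
    exact ⟨fun h i => h i (by omega), fun h i hi => h ⟨i, by omega⟩⟩
  rw [hadj]
  exact ⟨fun ⟨hx, ha⟩ => ⟨hx, fun i => ha.trans_le (hx.antitone (Fin.le_last i))⟩,
    fun ⟨hx, ha⟩ => ⟨hx, ha _⟩⟩

section SignedPerm

variable {n : ℕ}

def signedPerm (ε : Fin n → ℤˣ) (σ : Perm (Fin n)) (x : Fin n → ℤ) : Fin n → ℤ :=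
  fun i => ε i * x (σ i)

lemma abs_signedPerm (ε : Fin n → ℤˣ) (σ : Perm (Fin n)) (x : Fin n → ℤ) (i : Fin n) :
    |signedPerm ε σ x i| = |x (σ i)| := by
  rw [signedPerm, abs_mul, Int.isUnit_iff_abs_eq.mp (ε i).isUnit, one_mul]

lemma sq_signedPerm (ε : Fin n → ℤˣ) (σ : Perm (Fin n)) (x : Fin n → ℤ) (i : Fin n) :
    signedPerm ε σ x i ^ 2 = x (σ i) ^ 2 := by
  rw [← sq_abs, abs_signedPerm, sq_abs]

lemma signedPerm_signedPerm_inv (ε : Fin n → ℤˣ) (σ : Perm (Fin n)) (x : Fin n → ℤ) :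
    signedPerm (ε ∘ ⇑σ⁻¹) σ⁻¹ (signedPerm ε σ x) = x := by
  ext i
  simp [signedPerm, ← mul_assoc, ← Units.val_mul, Int.units_mul_self]

lemma exists_signedPerm_eq_of_injective_abs {x : Fin n → ℤ} (hx : ∀ i, x i ≠ 0)
    (habs : Function.Injective fun i => |x i|) :
    ∃ (ε : Fin n → ℤˣ) (σ : Perm (Fin n)) (y : Fin n → ℤ),
      StrictAnti y ∧ (∀ i, 0 < y i) ∧ signedPerm ε σ y = x := by
  obtain ⟨y, σ, hy, hxy⟩ := exists_strictAnti_comp_perm habs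
  have hyσ : ∀ i, y (σ i) = |x i| := fun i => (congrFun hxy i).symm
  refine ⟨fun i => if 0 ≤ x i then 1 else -1, σ, y, hy, fun j => ?_, funext fun i => ?_⟩
  · simpa [← hyσ] using abs_pos.mpr (hx (σ⁻¹ j))
  · by_cases h : 0 ≤ x i
    · simp [signedPerm, hyσ, h, abs_of_nonneg h]
    · simp [signedPerm, hyσ, h, abs_of_neg (not_le.mp h)]

lemma signedPerm_injective_of_strictAnti {ε ε' : Fin n → ℤˣ} {σ σ' : Perm (Fin n)}
    {y y' : Fin n → ℤ} (hy : StrictAnti y) (hy' : StrictAnti y') (hpos : ∀ i, 0 < y i)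
    (hpos' : ∀ i, 0 < y' i) (h : signedPerm ε σ y = signedPerm ε' σ' y') :
    ε = ε' ∧ σ = σ' ∧ y = y' := by
  have habs : y ∘ σ = y' ∘ σ' := funext fun i => by
    simpa [abs_signedPerm, abs_of_pos (hpos _), abs_of_pos (hpos' _)] using
      congrArg (|· i|) h
  obtain ⟨rfl, rfl⟩ := hy.eq_of_comp_perm_eq hy' habs
  refine ⟨funext fun i => Units.ext ?_, rfl, rfl⟩
  exact mul_right_cancel₀ (hpos (σ i)).ne' (congrFun h i)

theorem sum_eq_two_pow_mul_factorial_smul_sum_strictAnti {M : Type*} [AddCommMonoid M]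
    (s : Finset (Fin n → ℤ)) (f : (Fin n → ℤ) → M)
    (hs : ∀ x ∈ s, ∀ ε σ, signedPerm ε σ x ∈ s) (hf : ∀ x ε σ, f (signedPerm ε σ x) = f x)
    (hf_ne : ∀ x, f x ≠ 0 → (∀ i, x i ≠ 0) ∧ Function.Injective fun i => |x i|) :
    ∑ x ∈ s, f x = (2 ^ n * n.factorial) • ∑ x ∈ s with StrictAnti x ∧ ∀ i, 0 < x i, f x := by
  set D := s.filter fun x => StrictAnti x ∧ ∀ i, 0 < x i
  calc ∑ x ∈ s, f x
      = ∑ x ∈ s with (∀ i, x i ≠ 0) ∧ Function.Injective fun i => |x i|, f x :=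
        (sum_filter_of_ne fun x _ => hf_ne x).symm
    _ = ∑ p ∈ (univ : Finset ((Fin n → ℤˣ) × Perm (Fin n))) ×ˢ D, f p.2 := by
        symm
        refine sum_bij (fun p _ => signedPerm p.1.1 p.1.2 p.2) ?_ ?_ ?_ fun p _ => (hf _ _ _).symm
        · rintro ⟨⟨ε, σ⟩, y⟩ hp
          simp only [mem_product, mem_univ, true_and, D, mem_filter] at hp
          obtain ⟨hys, hy, hpos⟩ := hp
          refine mem_filter.mpr ⟨hs y hys ε σ, fun i => ?_, fun i j hij => ?_⟩
          · rw [← abs_ne_zero, abs_signedPerm, abs_of_pos (hpos _)]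
            exact (hpos _).ne'
          · simp only [abs_signedPerm, abs_of_pos (hpos _)] at hij
            exact σ.injective (hy.injective hij)
        · rintro ⟨⟨ε, σ⟩, y⟩ hp ⟨⟨ε', σ'⟩, y'⟩ hp' h
          simp only [mem_product, mem_univ, true_and, D, mem_filter] at hp hp'
          obtain ⟨rfl, rfl, rfl⟩ :=
            signedPerm_injective_of_strictAnti hp.2.1 hp'.2.1 hp.2.2 hp'.2.2 h
          rfl
        · intro x hx
          obtain ⟨hxs, hx0, habs⟩ := mem_filter.mp hx
          obtain ⟨ε, σ, y, hy, hpos, rfl⟩ := exists_signedPerm_eq_of_injective_abs hx0 habs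
          have hys : y ∈ s := signedPerm_signedPerm_inv ε σ y ▸ hs _ hxs _ _
          exact ⟨((ε, σ), y), mem_product.mpr ⟨mem_univ _, mem_filter.mpr ⟨hys, hy, hpos⟩⟩, rfl⟩
    _ = (2 ^ n * n.factorial) • ∑ x ∈ D, f x := by
        simp only [sum_product, sum_const, card_univ, Fintype.card_prod, Fintype.card_fun,
          Fintype.card_units_int, Fintype.card_perm, Fintype.card_fin]

end SignedPerm

lemma multSOodd_signedPerm (n : ℕ) (hn : 0 < n) (x : Fin n → ℤ) (ε : Fin n → ℤˣ)
    (σ : Perm (Fin n)) : multSOodd n hn (signedPerm ε σ x) = multSOodd n hn x := by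
  rw [multSOodd_eq, multSOodd_eq, sq_weylProd_eq_of_sq_eq_comp σ fun i => ?_]
  exact_mod_cast sq_signedPerm ε σ x i

lemma ne_zero_and_injective_abs_of_multSOodd_ne_zero (n : ℕ) (hn : 0 < n) {x : Fin n → ℤ}
    (hx : multSOodd n hn x ≠ 0) :
    (∀ i, x i ≠ 0) ∧ Function.Injective fun i => |x i| := by
  rw [multSOodd_eq] at hx
  obtain ⟨hx0, hinj⟩ := weylProd_ne_zero_iff.mp
    (pow_ne_zero_iff two_ne_zero |>.mp (div_ne_zero_iff.mp hx).1)
  refine ⟨fun i => by exact_mod_cast hx0 i, fun i j hij => hinj ?_⟩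
  simp only [← sq_eq_sq_iff_abs_eq_abs] at hij
  dsimp only
  exact_mod_cast hij

lemma signedPerm_mem_oddLatticeBall {n : ℕ} {B : ℤ} {r : ℝ} {x : Fin n → ℤ}
    (hx : x ∈ (Fintype.piFinset fun _ : Fin n => Icc (-B) B).filter
      (fun x => (∀ i, Odd (x i)) ∧ ∑ i, ((x i : ℤ) : ℝ) ^ 2 ≤ r))
    (ε : Fin n → ℤˣ) (σ : Perm (Fin n)) :
    signedPerm ε σ x ∈ (Fintype.piFinset fun _ : Fin n => Icc (-B) B).filter
      (fun x => (∀ i, Odd (x i)) ∧ ∑ i, ((x i : ℤ) : ℝ) ^ 2 ≤ r) := by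
  simp only [mem_filter, Fintype.mem_piFinset, mem_Icc, ← abs_le,
    ← odd_abs (a := signedPerm _ _ _ _), abs_signedPerm] at hx ⊢
  obtain ⟨hB, hodd, hr⟩ := hx
  refine ⟨fun i => hB (σ i), fun i => odd_abs.mpr (hodd (σ i)), ?_⟩
  have hsq : ∀ i, ((signedPerm ε σ x i : ℤ) : ℝ) ^ 2 = ((x (σ i) : ℤ) : ℝ) ^ 2 := fun i => by
    exact_mod_cast sq_signedPerm ε σ x i
  rwa [sum_congr rfl fun i _ => hsq i, Equiv.sum_comp σ fun i => ((x i : ℤ) : ℝ) ^ 2]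

/-- Lattice sum expression for the eigenvalue counting function of the Laplacian on
`SO(2n+1)`: eigenvalues are indexed by odd `x_1 > x_2 > ⋯ > x_n > 0` (coming from
highest weights `b_1 ≥ ⋯ ≥ b_n ≥ 0` via `x_j = 2b_j + 2n - 2j + 1`) with eigenvalue
`(1/4)Σ x_j² − n(4n²−1)/12` and multiplicity `m(x)`; then
`N(λ) = (1/(2^n n!)) Σ_{x ∈ 𝕆ⁿ, ‖x‖² ≤ R²} m(x)` with `R² = 4λ + n(4n²−1)/3`,
where `𝕆` denotes the odd integers. -/
theorem weyl_lattice_sum_SOodd (n : ℕ) (hn : 0 < n) (R : ℝ) :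
    (∑ x ∈ (Fintype.piFinset fun _ : Fin n =>
          Finset.Icc (-(⌊R⌋₊ : ℤ)) (⌊R⌋₊ : ℤ)).filter
        (fun x => (∀ i, Odd (x i)) ∧
          (∀ i : ℕ, ∀ h : i + 1 < n, x ⟨i + 1, by omega⟩ < x ⟨i, by omega⟩) ∧
          0 < x ⟨n - 1, by omega⟩ ∧
          ∑ i, ((x i : ℤ) : ℝ) ^ 2 ≤ R ^ 2),
        multSOodd n hn x)
      = (1 / ((2 : ℝ) ^ n * (n.factorial : ℝ))) *
        ∑ x ∈ (Fintype.piFinset fun _ : Fin n =>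
            Finset.Icc (-(⌊R⌋₊ : ℤ)) (⌊R⌋₊ : ℤ)).filter
          (fun x => (∀ i, Odd (x i)) ∧ ∑ i, ((x i : ℤ) : ℝ) ^ 2 ≤ R ^ 2),
          multSOodd n hn x := by
  rw [sum_eq_two_pow_mul_factorial_smul_sum_strictAnti _ _
      (fun _ hx => signedPerm_mem_oddLatticeBall hx) (multSOodd_signedPerm n hn)
      (fun _ => ne_zero_and_injective_abs_of_multSOodd_ne_zero n hn),
    nsmul_eq_mul, ← mul_assoc, one_div, Nat.cast_mul, Nat.cast_pow, Nat.cast_ofNat,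
    inv_mul_cancel₀ (by positivity), one_mul, filter_filter]
  refine sum_congr (filter_congr fun x _ => ?_) fun _ _ => rfl
  rw [← forall_succ_lt_and_lt_last_iff hn]
  tauto
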